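/- For positive integers d and q, with ε₂ = ⌈q/d⌉ - q/d, the sum Σ_{m=0}^{⌈q/d⌉-1} (q - m·d)² equals q³/(3d) + q²/2 + q·d/6 + (d²ε₂/3)(ε₂² - (3/2)ε₂ + 1/2). -/
import Mathlib

lemma sum_aux (a b : ℚ) (n : ℕ) :
    ∑ m ∈ Finset.range n, (a - m * b) ^ 2 =
      n * a ^ 2 - a * b * n * (n - 1) + b ^ 2 * (n * (n - 1) * (2 * n - 1)) / 6 := by
  induction n with
  | zero => simp
  | succ k ih =>
    rw [Finset.sum_range_succ, ih]
    push_cast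
    ring

theorem stmt_5 (d q : ℕ) (hd : 0 < d) (hq : 0 < q)
    (ε₂ : ℚ) (hε : ε₂ = ⌈(q : ℚ) / d⌉ - (q : ℚ) / d) :
    ∑ m ∈ Finset.range (⌈(q : ℚ) / d⌉).toNat, ((q : ℚ) - m * d) ^ 2 =
      (q : ℚ) ^ 3 / (3 * d) + q ^ 2 / 2 + q * d / 6
        + (d ^ 2 * ε₂ / 3) * (ε₂ ^ 2 - (3 / 2) * ε₂ + 1 / 2) := by
  have hd' : (0:ℚ) < d := by exact_mod_cast hd
  have hq' : (0:ℚ) < q := by exact_mod_cast hq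
  have hpos : (0:ℚ) < (q:ℚ)/d := div_pos hq' hd'
  have hceil : (0:ℤ) ≤ ⌈(q : ℚ) / d⌉ := by positivity
  have hcast : ((⌈(q : ℚ) / d⌉.toNat : ℕ) : ℚ) = (q:ℚ)/d + ε₂ := by
    have h1 : ((⌈(q : ℚ) / d⌉.toNat : ℕ) : ℚ) = ((⌈(q : ℚ) / d⌉ : ℤ) : ℚ) := by
      exact_mod_cast congrArg (Int.cast : ℤ → ℚ) (Int.toNat_of_nonneg hceil)
    rw [h1, hε]; ring
  rw [sum_aux, hcast]
  have hd0 : (d:ℚ) ≠ 0 := ne_of_gt hd'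
  field_simp
  ring
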